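/- Let n ≥ 3, let A = (a_{ij}) be a symmetric positive-definite real n×n matrix with inverse (a^{ij}), let b = (b_i) be a covector with 0 < b² := a^{ij}b_ib_j < 1, let (s_{ij}) be a skew-symmetric real n×n matrix, and let γ ∈ ℝ. Suppose that for every pair of indices (i,k) there exist a linear form f_{ik} on ℝⁿ and a constant σ_{ik} ∈ ℝ such that 3(n−1)·s_{i0}(y)·s_{k0}(y) + γ·(α(y)b_k − ȳ_k)·((n−1)α(y)b_i − (3+b²)ȳ_i) = (f_{ik}(y) + σ_{ik}·α(y))·(α(y) − β(y)) for all y ∈ ℝⁿ. Then γ = 0 and s_{ij} = 0 for all i, j (i.e., the 1-form β is closed). -/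

import Mathlib

/-!
Replacing `y` by `-y` fixes `α` and flips every linear form, so the odd part of the identity
determines `f_{ik}` and its even part becomes
`3(n-1) s_{i0} s_{k0} + γ ((n-1) α² b_i b_k + (3+b²) ȳ_i ȳ_k - β ((3+b²) b_k ȳ_i + (n-1) b_i ȳ_k))
  = σ_{ik} (α² - β²)`.
Comparing the `(i,k)` and `(k,i)` identities at some `y ≠ 0` with `β(y) = 0` gives
`σ_{ik} = σ_{ki}`, and subtracting them then gives `γ (4 + b² - n) β (b_k ȳ_i - b_i ȳ_k) = 0`.
Since `0 < b² < 1` the constant is nonzero, and since `A` is nonsingular the forms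
`b_k ȳ_i - b_i ȳ_k` are not all zero, so `γ = 0`.
The `(i,i)` identity then reads `3(n-1) s_{i0}² = σ_{ii} (α² - β²)`; as `n ≥ 3`, some `y ≠ 0` has
`s_{i0}(y) = β(y) = 0`, whence `σ_{ii} = 0` and `s_{i0} = 0`.
-/

open scoped BigOperators

noncomputable section

/-- `α(y) = √(a_{ij} yⁱ yʲ)`. -/
def alphaOf {n : ℕ} (A : Matrix (Fin n) (Fin n) ℝ) (y : Fin n → ℝ) : ℝ :=
  Real.sqrt (∑ i, ∑ j, A i j * y i * y j)

/-- `β(y) = b_i yⁱ`. -/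
def betaOf {n : ℕ} (b : Fin n → ℝ) (y : Fin n → ℝ) : ℝ := ∑ i, b i * y i

/-- `ȳ_k = a_{kj} yʲ`. -/
def lowered {n : ℕ} (A : Matrix (Fin n) (Fin n) ℝ) (k : Fin n) (y : Fin n → ℝ) : ℝ :=
  ∑ j, A k j * y j

open Matrix

theorem Matrix.exists_ne_zero_mulVec_eq_zero {K : Type*} [Field K] {m n : ℕ}
    (M : Matrix (Fin m) (Fin n) K) (h : m < n) : ∃ y ≠ 0, M *ᵥ y = 0 := by
  obtain ⟨y, hy, hy0⟩ := Submodule.ne_bot_iff _ |>.mp <|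
    LinearMap.ker_ne_bot_of_finrank_lt (f := M.mulVecLin) (by simpa using h)
  exact ⟨y, hy0, hy⟩

theorem eq_zero_of_dotProduct_mul_dotProduct_eq_zero {R : Type*} [CommRing R] [LinearOrder R]
    [IsStrictOrderedRing R] {n : Type*} [Fintype n] {c d : n → R} (hc : c ≠ 0)
    (h : ∀ y, (c ⬝ᵥ y) * (d ⬝ᵥ y) = 0) : d = 0 := by
  by_contra hd
  have hcc : c ⬝ᵥ c ≠ 0 := mt dotProduct_self_eq_zero.mp hc
  have hdd : d ⬝ᵥ d ≠ 0 := mt dotProduct_self_eq_zero.mp hd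
  have hdc : d ⬝ᵥ c = 0 := (mul_eq_zero.mp (h c)).resolve_left hcc
  have hcd : c ⬝ᵥ d = 0 := (mul_eq_zero.mp (h d)).resolve_right hdd
  have := h (c + d)
  simp only [dotProduct_add, hdc, hcd, add_zero, zero_add] at this
  exact mul_ne_zero hcc hdd this

theorem Matrix.exists_smul_row_ne_smul_row {K : Type*} [Field K] {n : ℕ}
    {A : Matrix (Fin n) (Fin n) K} (hA : A.det ≠ 0) (hn : 2 ≤ n) {b : Fin n → K} (hb : b ≠ 0) :
    ∃ i k, b k • A i ≠ b i • A k := by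
  by_contra! hrows
  obtain ⟨i₀, hi₀⟩ := Function.ne_iff.mp hb
  obtain ⟨y, hy, hAy⟩ := (Matrix.of ![A i₀]).exists_ne_zero_mulVec_eq_zero (by omega)
  have hrow : A i₀ ⬝ᵥ y = 0 := congrFun hAy 0
  refine hA (exists_mulVec_eq_zero_iff.mp ⟨y, hy, funext fun k => ?_⟩)
  have hk := congrArg (· ⬝ᵥ y) (hrows k i₀)
  simp only [smul_dotProduct, hrow, smul_eq_mul, mul_zero] at hk
  exact (mul_eq_zero.mp hk).resolve_left hi₀

section

variable {n : ℕ} {A : Matrix (Fin n) (Fin n) ℝ}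

theorem Matrix.PosDef.dotProduct_mulVec_pos_real (hA : A.PosDef) {y : Fin n → ℝ} (hy : y ≠ 0) :
    0 < y ⬝ᵥ A *ᵥ y := by
  simpa using hA.dotProduct_mulVec_pos hy

theorem alphaOf_eq_sqrt (A : Matrix (Fin n) (Fin n) ℝ) (y : Fin n → ℝ) :
    alphaOf A y = √(y ⬝ᵥ A *ᵥ y) := by
  simp only [alphaOf, dotProduct, mulVec, Finset.mul_sum]
  congr 1
  exact Finset.sum_congr rfl fun i _ => Finset.sum_congr rfl fun j _ => by ring

theorem alphaOf_neg (A : Matrix (Fin n) (Fin n) ℝ) (y : Fin n → ℝ) :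
    alphaOf A (-y) = alphaOf A y := by
  simp [alphaOf_eq_sqrt, mulVec_neg]

theorem alphaOf_sq (hA : A.PosSemidef) (y : Fin n → ℝ) : alphaOf A y ^ 2 = y ⬝ᵥ A *ᵥ y :=
  alphaOf_eq_sqrt A y ▸ Real.sq_sqrt (by simpa using hA.dotProduct_mulVec_nonneg y)

theorem alphaOf_ne_zero (hA : A.PosDef) {y : Fin n → ℝ} (hy : y ≠ 0) : alphaOf A y ≠ 0 := by
  rw [alphaOf_eq_sqrt]
  exact (Real.sqrt_pos.mpr (hA.dotProduct_mulVec_pos_real hy)).ne'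

theorem lowered_eq_mulVec (A : Matrix (Fin n) (Fin n) ℝ) (k : Fin n) (y : Fin n → ℝ) :
    lowered A k y = (A *ᵥ y) k := rfl

theorem betaOf_eq_dotProduct (b y : Fin n → ℝ) : betaOf b y = b ⬝ᵥ y := rfl

theorem exists_quadratic_identity_of_dvd (hA : A.PosDef) {b u v : Fin n → ℝ} {i k : Fin n}
    {m c γ : ℝ}
    (h : ∃ (f : Fin n → ℝ) (σ : ℝ), ∀ y : Fin n → ℝ,
      3 * m * (u ⬝ᵥ y) * (v ⬝ᵥ y)
        + γ * (alphaOf A y * b k - lowered A k y) * (m * alphaOf A y * b i - c * lowered A i y) =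
      ((f ⬝ᵥ y) + σ * alphaOf A y) * (alphaOf A y - betaOf b y)) :
    ∃ σ : ℝ, ∀ y : Fin n → ℝ,
      3 * m * (u ⬝ᵥ y) * (v ⬝ᵥ y)
        + γ * (m * (y ⬝ᵥ A *ᵥ y) * b i * b k + c * (A *ᵥ y) i * (A *ᵥ y) k
          - (b ⬝ᵥ y) * (c * b k * (A *ᵥ y) i + m * b i * (A *ᵥ y) k)) =
      σ * (y ⬝ᵥ A *ᵥ y - (b ⬝ᵥ y) ^ 2) := by
  obtain ⟨f, σ, hf⟩ := h
  refine ⟨σ, fun y => ?_⟩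
  rcases eq_or_ne y 0 with rfl | hy
  · simp
  have hplus := hf y
  have hminus := hf (-y)
  simp only [lowered_eq_mulVec, betaOf_eq_dotProduct, alphaOf_neg, mulVec_neg, dotProduct_neg,
    Pi.neg_apply] at hplus hminus
  have hodd : f ⬝ᵥ y = σ * (b ⬝ᵥ y) - γ * (c * b k * (A *ᵥ y) i + m * b i * (A *ᵥ y) k) :=
    mul_left_cancel₀ (alphaOf_ne_zero hA hy) (by linear_combination (hminus - hplus) / 2)
  rw [← alphaOf_sq hA.posSemidef]
  linear_combination (hplus + hminus) / 2 - (b ⬝ᵥ y) * hodd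

theorem gamma_mul_wedge_eq_zero (hA : A.PosDef) (hn : 2 ≤ n) {b : Fin n → ℝ}
    {s : Matrix (Fin n) (Fin n) ℝ} {m c γ : ℝ} (hcm : c ≠ m)
    (hquad : ∀ i k : Fin n, ∃ σ : ℝ, ∀ y : Fin n → ℝ,
      3 * m * (s i ⬝ᵥ y) * (s k ⬝ᵥ y)
        + γ * (m * (y ⬝ᵥ A *ᵥ y) * b i * b k + c * (A *ᵥ y) i * (A *ᵥ y) k
          - (b ⬝ᵥ y) * (c * b k * (A *ᵥ y) i + m * b i * (A *ᵥ y) k)) =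
      σ * (y ⬝ᵥ A *ᵥ y - (b ⬝ᵥ y) ^ 2))
    (i k : Fin n) (y : Fin n → ℝ) :
    γ * (b ⬝ᵥ y) * (b k * (A *ᵥ y) i - b i * (A *ᵥ y) k) = 0 := by
  obtain ⟨σ, hik⟩ := hquad i k
  obtain ⟨σ', hki⟩ := hquad k i
  obtain ⟨y₀, hy₀, hby₀⟩ := (Matrix.of ![b]).exists_ne_zero_mulVec_eq_zero (by omega)
  have hβ₀ : b ⬝ᵥ y₀ = 0 := congrFun hby₀ 0
  have hσ : σ = σ' := by
    have h := hik y₀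
    have h' := hki y₀
    rw [hβ₀] at h h'
    have : (σ - σ') * (y₀ ⬝ᵥ A *ᵥ y₀) = 0 := by linear_combination h' - h
    exact sub_eq_zero.mp ((mul_eq_zero.mp this).resolve_right
      (hA.dotProduct_mulVec_pos_real hy₀).ne')
  subst hσ
  have : (c - m) * (γ * (b ⬝ᵥ y) * (b k * (A *ᵥ y) i - b i * (A *ᵥ y) k)) = 0 := by
    linear_combination hki y - hik y
  exact (mul_eq_zero.mp this).resolve_left (sub_ne_zero.mpr hcm)

theorem gamma_eq_zero_of_wedge (hA : A.det ≠ 0) (hn : 2 ≤ n) {b : Fin n → ℝ} (hb : b ≠ 0)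
    {γ : ℝ} (h : ∀ (i k : Fin n) (y : Fin n → ℝ),
      γ * (b ⬝ᵥ y) * (b k * (A *ᵥ y) i - b i * (A *ᵥ y) k) = 0) :
    γ = 0 := by
  by_contra hγ
  obtain ⟨i, k, hik⟩ := exists_smul_row_ne_smul_row hA hn hb
  refine hik (sub_eq_zero.mp (eq_zero_of_dotProduct_mul_dotProduct_eq_zero hb fun y => ?_))
  have := h i k y
  rw [mul_assoc, mul_eq_zero, or_iff_right hγ] at this
  simpa [sub_dotProduct, smul_dotProduct, mulVec_apply, row_apply'] using this

theorem eq_zero_of_forall_sq_dotProduct_eq (hA : A.PosDef) (hn : 3 ≤ n) {m σ : ℝ} (hm : m ≠ 0)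
    {u b : Fin n → ℝ}
    (h : ∀ y : Fin n → ℝ, 3 * m * (u ⬝ᵥ y) * (u ⬝ᵥ y) = σ * (y ⬝ᵥ A *ᵥ y - (b ⬝ᵥ y) ^ 2)) :
    u = 0 := by
  obtain ⟨y₀, hy₀, hker⟩ := (Matrix.of ![u, b]).exists_ne_zero_mulVec_eq_zero (by omega)
  have hσ : σ = 0 := by
    have := h y₀
    rw [show u ⬝ᵥ y₀ = 0 from congrFun hker 0, show b ⬝ᵥ y₀ = 0 from congrFun hker 1] at this
    have : σ * (y₀ ⬝ᵥ A *ᵥ y₀) = 0 := by linear_combination -this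
    exact (mul_eq_zero.mp this).resolve_right (hA.dotProduct_mulVec_pos_real hy₀).ne'
  have huu : 3 * m * (u ⬝ᵥ u) * (u ⬝ᵥ u) = 0 := by simpa [hσ] using h u
  simpa [hm] using huu

end

theorem stmt_6_general {n : ℕ} (hn : 3 ≤ n) (A : Matrix (Fin n) (Fin n) ℝ)
    (hpos : A.PosDef) (b : Fin n → ℝ)
    (hb2pos : 0 < ∑ i, ∑ j, A⁻¹ i j * b i * b j)
    (hb2lt : (∑ i, ∑ j, A⁻¹ i j * b i * b j) < 1)
    (s : Matrix (Fin n) (Fin n) ℝ) (γ : ℝ)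
    (h : ∀ i k : Fin n, ∃ (f : Fin n → ℝ) (σ : ℝ), ∀ y : Fin n → ℝ,
      3 * ((n : ℝ) - 1) * (∑ j, s i j * y j) * (∑ j, s k j * y j)
        + γ * (alphaOf A y * b k - lowered A k y) *
          (((n : ℝ) - 1) * alphaOf A y * b i
            - (3 + ∑ i', ∑ j', A⁻¹ i' j' * b i' * b j') * lowered A i y) =
      ((∑ j, f j * y j) + σ * alphaOf A y) * (alphaOf A y - betaOf b y)) :
    γ = 0 ∧ ∀ i j, s i j = 0 := by
  have hb : b ≠ 0 := by
    rintro rfl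
    simp at hb2pos
  have hn' : (3 : ℝ) ≤ n := by exact_mod_cast hn
  have hcm : 3 + ∑ i, ∑ j, A⁻¹ i j * b i * b j ≠ (n : ℝ) - 1 := by
    intro heq
    rcases le_or_gt n 4 with h4 | h4
    · have : (n : ℝ) ≤ 4 := by exact_mod_cast h4
      linarith
    · have : (5 : ℝ) ≤ n := by exact_mod_cast h4
      linarith
  have hquad i k := exists_quadratic_identity_of_dvd hpos (h i k)
  have hγ : γ = 0 := gamma_eq_zero_of_wedge hpos.det_pos.ne' (by omega) hb
    (gamma_mul_wedge_eq_zero hpos (by omega) hcm hquad)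
  subst hγ
  refine ⟨rfl, fun i j => ?_⟩
  obtain ⟨σ, hσ⟩ := hquad i i
  have hsq : ∀ y : Fin n → ℝ, 3 * ((n : ℝ) - 1) * (s i ⬝ᵥ y) * (s i ⬝ᵥ y) =
      σ * (y ⬝ᵥ A *ᵥ y - (b ⬝ᵥ y) ^ 2) := fun y => by
    linear_combination hσ y
  exact congrFun (eq_zero_of_forall_sq_dotProduct_eq hpos hn (by linarith) hsq) j

/-- Lemma 3.5: if, for every pair `(i,k)`,
`3(n−1)s_{i0}s_{k0} + γ(αb_k − ȳ_k)((n−1)αb_i − (3+b²)ȳ_i) = (f_{ik} + σ_{ik}α)(α − β)`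
identically in `y` (the meaning of the divisibility by `1 − s`), then `γ = 0` and the
skew-symmetric matrix `(s_{ij})` vanishes, i.e. `β` is closed. -/
theorem stmt_6 {n : ℕ} (hn : 3 ≤ n) (A : Matrix (Fin n) (Fin n) ℝ)
    (hsym : A.IsSymm) (hpos : A.PosDef) (b : Fin n → ℝ)
    (hb2pos : 0 < ∑ i, ∑ j, A⁻¹ i j * b i * b j)
    (hb2lt : (∑ i, ∑ j, A⁻¹ i j * b i * b j) < 1)
    (s : Matrix (Fin n) (Fin n) ℝ) (hskew : ∀ i j, s i j = - s j i) (γ : ℝ)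
    (h : ∀ i k : Fin n, ∃ (f : Fin n → ℝ) (σ : ℝ), ∀ y : Fin n → ℝ,
      3 * ((n : ℝ) - 1) * (∑ j, s i j * y j) * (∑ j, s k j * y j)
        + γ * (alphaOf A y * b k - lowered A k y) *
          (((n : ℝ) - 1) * alphaOf A y * b i
            - (3 + ∑ i', ∑ j', A⁻¹ i' j' * b i' * b j') * lowered A i y) =
      ((∑ j, f j * y j) + σ * alphaOf A y) * (alphaOf A y - betaOf b y)) :
    γ = 0 ∧ ∀ i j, s i j = 0 :=
  stmt_6_general hn A hpos b hb2pos hb2lt s γ h
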